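/- Let n ≥ 2 and λ ∈ ℂ^n with λ_n = 0. Suppose there exist p_1, …, p_{n−1} ∈ ℤ and m_1, …, m_{n−1} : Fin n → ℕ such that i p_j + ⟨m_j, λ⟩ = 0 for every j = 1, …, n−1, and such that the (n−1)×n rational matrix whose j-th row is (p_j, m_j(1), …, m_j(n−1)) has rank n−1. Then for every s ∈ Fin n there exists a rational number ν_s such that λ_s = ν_s · i. Here ⟨m,λ⟩ = Σ_j m_j λ_j. -/

import Mathlib

/-!
The vector `v = (1, -iλ₁, …, -iλ_{n-1})` is annihilated by the coefficient matrix `R` of the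
resonances. As `R` has full row rank, it has a rational right inverse `B`, and `1 - B R` is a
rational matrix fixing `v` whose columns lie in the rational kernel of `R`, a line `ℚ w`. Hence `v`
is a complex multiple of `w`, and normalising by `v₀ = 1` makes every `v_k = w_k / w₀` rational.
-/

open Matrix Module

namespace Matrix

variable {K : Type*} [Field K] {m n : Type*} [Fintype n]

theorem exists_mul_eq_one_of_rank_eq_card_height [Fintype m] [DecidableEq m] (A : Matrix m n K)
    (hA : A.rank = Fintype.card m) : ∃ B : Matrix n m K, A * B = 1 := by
  classical
  have hsurj : LinearMap.range A.mulVecLin = ⊤ :=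
    Submodule.eq_top_of_finrank_eq (by rw [finrank_fintype_fun_eq_card]; exact hA)
  obtain ⟨g, hg⟩ := A.mulVecLin.exists_rightInverse_of_surjective hsurj
  refine ⟨LinearMap.toMatrix' g, toLin'.injective ?_⟩
  rw [toLin'_mul, toLin'_toMatrix', toLin'_one]
  exact hg

theorem finrank_ker_mulVecLin_le_one (A : Matrix m n K)
    (hA : Fintype.card n ≤ A.rank + 1) : finrank K (LinearMap.ker A.mulVecLin) ≤ 1 := by
  have := LinearMap.finrank_range_add_finrank_ker A.mulVecLin
  rw [finrank_fintype_fun_eq_card] at this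
  unfold rank at hA
  omega

theorem exists_eq_vecMulVec_of_mul_eq_zero {o : Type*} (A : Matrix m n K)
    (hA : finrank K (LinearMap.ker A.mulVecLin) ≤ 1) (E : Matrix n o K) (hE : A * E = 0) :
    ∃ (w : n → K) (c : o → K), E = vecMulVec w c := by
  obtain ⟨⟨w, _⟩, hw⟩ := finrank_le_one_iff.mp hA
  have hcol (l : o) : ∃ c : K, c • w = fun k => E k l := by
    obtain ⟨c, hc⟩ := hw ⟨fun k => E k l, by
      rw [LinearMap.mem_ker, mulVecLin_apply]
      ext j
      simpa [mul_apply, mulVec, dotProduct] using congrFun (congrFun hE j) l⟩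
    exact ⟨c, congrArg Subtype.val hc⟩
  choose c hc using hcol
  refine ⟨w, c, ?_⟩
  ext k l
  rw [vecMulVec_apply, mul_comm, ← smul_eq_mul, ← Pi.smul_apply (c l) w, hc l]

variable {L : Type*} [CommRing L] [Algebra K L]

theorem exists_eq_mul_algebraMap_of_map_mulVec_eq_zero [Fintype m] [DecidableEq m] [DecidableEq n]
    (A : Matrix m n K) (hA : A.rank = Fintype.card m) (hcard : Fintype.card n ≤ Fintype.card m + 1)
    {v : n → L} (hv : A.map (algebraMap K L) *ᵥ v = 0) :
    ∃ (w : n → K) (t : L), ∀ k, v k = t * algebraMap K L (w k) := by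
  obtain ⟨B, hAB⟩ := A.exists_mul_eq_one_of_rank_eq_card_height hA
  have hE : A * (1 - B * A) = 0 := by
    rw [Matrix.mul_sub, Matrix.mul_one, ← Matrix.mul_assoc, hAB, Matrix.one_mul, sub_self]
  obtain ⟨w, c, hwc⟩ := A.exists_eq_vecMulVec_of_mul_eq_zero
    (A.finrank_ker_mulVecLin_le_one (hA ▸ hcard)) _ hE
  have hv' : (1 - B * A).map (algebraMap K L) *ᵥ v = v := by
    rw [Matrix.map_sub _ (map_sub _), Matrix.map_one _ (map_zero _) (map_one _), Matrix.map_mul,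
      sub_mulVec, one_mulVec, ← mulVec_mulVec, hv, mulVec_zero, sub_zero]
  refine ⟨w, ∑ l, algebraMap K L (c l) * v l, fun k => ?_⟩
  rw [← congrFun hv' k, hwc, mulVec, dotProduct, Finset.sum_mul]
  exact Finset.sum_congr rfl fun l _ => by simp only [map_apply, vecMulVec_apply, map_mul]; ring

theorem exists_algebraMap_eq_of_map_mulVec_eq_zero [Fintype m] [DecidableEq m] [DecidableEq n]
    (A : Matrix m n K) (hA : A.rank = Fintype.card m) (hcard : Fintype.card n ≤ Fintype.card m + 1)
    {v : n → L} (hv : A.map (algebraMap K L) *ᵥ v = 0) {k₀ : n} (hk₀ : v k₀ = 1) (k : n) :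
    ∃ q : K, v k = algebraMap K L q := by
  obtain ⟨w, t, hwt⟩ := A.exists_eq_mul_algebraMap_of_map_mulVec_eq_zero hA hcard hv
  have ht : t * algebraMap K L (w k₀) = 1 := hk₀ ▸ (hwt k₀).symm
  by_cases hw₀ : w k₀ = 0
  · rw [hw₀, map_zero, mul_zero] at ht
    exact ⟨0, subsingleton_of_zero_eq_one ht |>.elim _ _⟩
  · refine ⟨w k / w k₀, ?_⟩
    rw [hwt k, ← mul_div_cancel₀ (w k) hw₀, map_mul, ← mul_assoc, ht, one_mul,
      mul_div_cancel₀ _ hw₀]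

end Matrix

open Complex

theorem mulVec_cons_one_neg_I_mul_eq_zero {ι : Type*} {n : ℕ} (lam : Fin (n + 1) → ℂ)
    (hlast : lam (Fin.last n) = 0) (p : ι → ℤ) (m : ι → Fin (n + 1) → ℕ)
    (hres : ∀ j, I * (p j : ℂ) + ∑ s, (m j s : ℂ) * lam s = 0) (R : Matrix ι (Fin (n + 1)) ℚ)
    (hR_zero : ∀ j, R j 0 = p j) (hR_succ : ∀ j (i : Fin n), R j i.succ = m j i.castSucc) :
    R.map (algebraMap ℚ ℂ) *ᵥ Fin.cons 1 (fun i => -I * lam i.castSucc) = 0 := by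
  ext j
  have := hres j
  rw [Fin.sum_univ_castSucc, hlast, mul_zero, add_zero] at this
  simp only [mulVec, dotProduct, map_apply, Fin.sum_univ_succ, Fin.cons_zero, Fin.cons_succ,
    hR_zero, hR_succ, Pi.zero_apply, mul_left_comm _ (-I), ← Finset.mul_sum, map_intCast,
    map_natCast]
  linear_combination (-I) * this + (p j : ℂ) * I_sq

/-- Corollary 1.2 at the level of eigenvalues: assume `λ_n = 0` and there are
`n−1` resonance relations `i p_j + ⟨m_j, λ⟩ = 0` whose truncated coefficient
matrix (rows `(p_j, m_j(1), …, m_j(n−1))`) has rank `n−1`. Then every `λ_s` is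
a rational multiple of the imaginary unit `i`. -/
theorem stmt_13 {n : ℕ} (hn : 2 ≤ n) (lam : Fin n → ℂ)
    (hlast : lam ⟨n - 1, by omega⟩ = 0)
    (p : Fin (n - 1) → ℤ) (m : Fin (n - 1) → Fin n → ℕ)
    (hres : ∀ j : Fin (n - 1),
      Complex.I * (p j : ℂ) + ∑ s, (m j s : ℂ) * lam s = 0)
    (R : Matrix (Fin (n - 1)) (Fin n) ℚ)
    (hR : ∀ (j : Fin (n - 1)) (k : Fin n), R j k =
      if (k : ℕ) = 0 then (p j : ℚ)
      else (m j ⟨(k : ℕ) - 1, Nat.lt_of_le_of_lt (Nat.sub_le _ _) k.isLt⟩ : ℚ))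
    (hrank : R.rank = n - 1) :
    ∀ s : Fin n, ∃ q : ℚ, lam s = (q : ℂ) * Complex.I := by
  obtain ⟨n, rfl⟩ : ∃ k, n = k + 1 := ⟨n - 1, by omega⟩
  have hv := mulVec_cons_one_neg_I_mul_eq_zero lam hlast p m hres R
    (fun j => by simp [hR]) (fun j i => by simp [hR]; rfl)
  have hrat := R.exists_algebraMap_eq_of_map_mulVec_eq_zero (by simpa using hrank) (by simp) hv
    (k₀ := 0) rfl
  intro s
  induction s using Fin.lastCases with
  | last => exact ⟨0, by rw [Rat.cast_zero, zero_mul]; exact hlast⟩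
  | cast i =>
    obtain ⟨q, hq⟩ := hrat i.succ
    refine ⟨q, ?_⟩
    simp only [Fin.cons_succ, eq_ratCast] at hq
    linear_combination I * hq + lam i.castSucc * I_sq
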